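/- arXiv:2402.00495 — 5 statements merged into one kernel-verified Lean document; each statement's English description precedes it below -/
import Mathlib

section
/- Given two full-rank 3×4 real matrices P₁, P₂, the function (x, y) ↦ det of the 6×6 block matrix [[P₁, x, 0], [P₂, 0, y]] is a bilinear form in (x, y) ∈ ℝ³ × ℝ³; hence there exists a 3×3 real matrix F such that this determinant equals xᵀ F y for all x, y. -/
open Matrix

/-- The 6×6 block matrix `[[P₁, x, 0], [P₂, 0, y]]` built from two 3×4 matrices
and two vectors `x, y ∈ ℝ³`. -/
def camBlock (P₁ P₂ : Matrix (Fin 3) (Fin 4) ℝ) (x y : Fin 3 → ℝ) :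
    Matrix (Fin 6) (Fin 6) ℝ :=
  Matrix.of fun i j =>
    if hi : (i : ℕ) < 3 then
      if hj : (j : ℕ) < 4 then P₁ ⟨i, hi⟩ ⟨j, hj⟩
      else if (j : ℕ) = 4 then x ⟨i, hi⟩ else 0
    else
      if hj : (j : ℕ) < 4 then P₂ ⟨(i : ℕ) - 3, by omega⟩ ⟨j, hj⟩
      else if (j : ℕ) = 4 then 0 else y ⟨(i : ℕ) - 3, by omega⟩

namespace CamAux

def colx (x : Fin 3 → ℝ) : Fin 6 → ℝ := fun i => if h : (i:ℕ) < 3 then x ⟨i, h⟩ else 0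
def coly (y : Fin 3 → ℝ) : Fin 6 → ℝ := fun i => if h : (i:ℕ) < 3 then 0 else y ⟨(i:ℕ)-3, by omega⟩

/-- standard basis vector of ℝ³ -/
def e (i : Fin 3) : Fin 3 → ℝ := Pi.single i 1

lemma colx_add (x x' : Fin 3 → ℝ) : colx (x + x') = colx x + colx x' := by
  funext i; simp only [colx, Pi.add_apply]; split <;> simp

lemma colx_smul (a : ℝ) (x : Fin 3 → ℝ) : colx (a • x) = a • colx x := by
  funext i; simp only [colx, Pi.smul_apply]; split <;> simp

lemma coly_add (y y' : Fin 3 → ℝ) : coly (y + y') = coly y + coly y' := by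
  funext i; simp only [coly, Pi.add_apply]; split <;> simp

lemma coly_smul (a : ℝ) (y : Fin 3 → ℝ) : coly (a • y) = a • coly y := by
  funext i; simp only [coly, Pi.smul_apply]; split <;> simp

lemma cb_x (P₁ P₂ : Matrix (Fin 3) (Fin 4) ℝ) (x y : Fin 3 → ℝ) :
    camBlock P₁ P₂ x y = (camBlock P₁ P₂ 0 y).updateCol 4 (colx x) := by
  ext i j; fin_cases i <;> fin_cases j <;> rfl

lemma cb_y (P₁ P₂ : Matrix (Fin 3) (Fin 4) ℝ) (x y : Fin 3 → ℝ) :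
    camBlock P₁ P₂ x y = (camBlock P₁ P₂ x 0).updateCol 5 (coly y) := by
  ext i j; fin_cases i <;> fin_cases j <;> rfl

lemma det_add_left (P₁ P₂ : Matrix (Fin 3) (Fin 4) ℝ) (x x' y : Fin 3 → ℝ) :
    (camBlock P₁ P₂ (x + x') y).det
      = (camBlock P₁ P₂ x y).det + (camBlock P₁ P₂ x' y).det := by
  rw [cb_x P₁ P₂ (x + x') y, colx_add, Matrix.det_updateCol_add, ← cb_x, ← cb_x]

lemma det_smul_left (P₁ P₂ : Matrix (Fin 3) (Fin 4) ℝ) (a : ℝ) (x y : Fin 3 → ℝ) :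
    (camBlock P₁ P₂ (a • x) y).det = a * (camBlock P₁ P₂ x y).det := by
  rw [cb_x P₁ P₂ (a • x) y, colx_smul, Matrix.det_updateCol_smul, ← cb_x]

lemma det_add_right (P₁ P₂ : Matrix (Fin 3) (Fin 4) ℝ) (x y y' : Fin 3 → ℝ) :
    (camBlock P₁ P₂ x (y + y')).det
      = (camBlock P₁ P₂ x y).det + (camBlock P₁ P₂ x y').det := by
  rw [cb_y P₁ P₂ x (y + y'), coly_add, Matrix.det_updateCol_add, ← cb_y, ← cb_y]

lemma det_smul_right (P₁ P₂ : Matrix (Fin 3) (Fin 4) ℝ) (a : ℝ) (x y : Fin 3 → ℝ) :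
    (camBlock P₁ P₂ x (a • y)).det = a * (camBlock P₁ P₂ x y).det := by
  rw [cb_y P₁ P₂ x (a • y), coly_smul, Matrix.det_updateCol_smul, ← cb_y]

lemma vec_expand (x : Fin 3 → ℝ) : x = x 0 • e 0 + x 1 • e 1 + x 2 • e 2 := by
  funext j; fin_cases j <;> simp [e, Pi.single_apply]

lemma expand_left (P₁ P₂ : Matrix (Fin 3) (Fin 4) ℝ) (x y : Fin 3 → ℝ) :
    (camBlock P₁ P₂ x y).det
      = x 0 * (camBlock P₁ P₂ (e 0) y).det + x 1 * (camBlock P₁ P₂ (e 1) y).det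
        + x 2 * (camBlock P₁ P₂ (e 2) y).det := by
  conv_lhs => rw [vec_expand x]
  rw [det_add_left, det_add_left, det_smul_left, det_smul_left, det_smul_left]

lemma expand_right (P₁ P₂ : Matrix (Fin 3) (Fin 4) ℝ) (x y : Fin 3 → ℝ) :
    (camBlock P₁ P₂ x y).det
      = y 0 * (camBlock P₁ P₂ x (e 0)).det + y 1 * (camBlock P₁ P₂ x (e 1)).det
        + y 2 * (camBlock P₁ P₂ x (e 2)).det := by
  conv_lhs => rw [vec_expand y]
  rw [det_add_right, det_add_right, det_smul_right, det_smul_right, det_smul_right]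

end CamAux

/-- The block determinant is a bilinear form in `(x, y)`: there is a 3×3 matrix `F`
such that it equals `xᵀ F y` for all `x, y`. -/
theorem blockDet_bilinear (P₁ P₂ : Matrix (Fin 3) (Fin 4) ℝ)
    (h₁ : P₁.rank = 3) (h₂ : P₂.rank = 3) :
    ∃ F : Matrix (Fin 3) (Fin 3) ℝ,
      ∀ x y : Fin 3 → ℝ, (camBlock P₁ P₂ x y).det = x ⬝ᵥ F.mulVec y := by
  refine ⟨fun i j => (camBlock P₁ P₂ (CamAux.e i) (CamAux.e j)).det, fun x y => ?_⟩
  rw [CamAux.expand_left, CamAux.expand_right P₁ P₂ (CamAux.e 0),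
    CamAux.expand_right P₁ P₂ (CamAux.e 1), CamAux.expand_right P₁ P₂ (CamAux.e 2)]
  simp only [dotProduct, Matrix.mulVec, Fin.sum_univ_three]
  ring
end

section
/- Let F be a rank-2 real 3×3 matrix with left kernel spanned by e (i.e. eᵀ F = 0, e ≠ 0). Then the cameras P₁ = [[e]ₓ F | e] and P₂ = [I | 0] are full rank и and their fundamental matrix is proportional to F, i.e. P₁ᵀ F P₂ is skew-symmetric. -/
open Matrix

/-- The skew-symmetric (cross-product) matrix of a vector `t ∈ ℝ³`. -/
def skewMat (t : Fin 3 → ℝ) : Matrix (Fin 3) (Fin 3) ℝ :=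
  !![0, -t 2, t 1; t 2, 0, -t 0; -t 1, t 0, 0]

/-- `[A | b]`: the 3×4 matrix with left 3×3 block `A` and last column `b`. -/
def aug (A : Matrix (Fin 3) (Fin 3) ℝ) (b : Fin 3 → ℝ) : Matrix (Fin 3) (Fin 4) ℝ :=
  Matrix.of fun i j => if h : (j : ℕ) < 3 then A i ⟨j, h⟩ else b i

/-! Writing `P₁ = [e]ₓF·[I | 0] + [0 | e]` and using `eᵀF = 0`, the matrix `P₁ᵀFP₂` is the
congruence `[I | 0]ᵀ (Fᵀ[e]ₓᵀF) [I | 0]` of a skew-symmetric matrix. For the rank of `P₁`: if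
`xᵀP₁ = 0` then `x × e` lies in the left kernel of `F`, which is spanned by `e`; being orthogonal
to `e` it vanishes, and together with `x · e = 0` this forces `x = 0`. -/

namespace Matrix

variable {m n K : Type*} [Fintype m] [Field K]

theorem rank_eq_card_of_vecMul_eq_zero [Fintype n] {A : Matrix m n K}
    (hA : ∀ x, vecMul x A = 0 → x = 0) : A.rank = Fintype.card m :=
  LinearIndependent.rank_matrix <| vecMul_injective_iff.mp <|
    (injective_iff_map_eq_zero A.vecMulLinear).mpr hA

theorem exists_smul_eq_of_vecMul_eq_zero [Fintype n] {F : Matrix m n K}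
    (hF : F.rank + 1 = Fintype.card m) {e w : m → K} (he : e ≠ 0)
    (heF : vecMul e F = 0) (hwF : vecMul w F = 0) : ∃ c : K, c • e = w := by
  have hker : Module.finrank K (LinearMap.ker F.vecMulLinear) = 1 := by
    have := Fᵀ.mulVecLin.finrank_range_add_finrank_ker
    rw [← rank, rank_transpose, mulVecLin_transpose, Module.finrank_fintype_fun_eq_card] at this
    omega
  obtain ⟨c, hc⟩ := (finrank_eq_one_iff_of_nonzero' (⟨e, heF⟩ : LinearMap.ker F.vecMulLinear)
    fun h => he (congrArg Subtype.val h)).mp hker ⟨w, hwF⟩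
  exact ⟨c, congrArg Subtype.val hc⟩

theorem transpose_mul_mul_eq_neg {R : Type*} [CommRing R] {S : Matrix m m R}
    (hS : Sᵀ = -S) (B : Matrix m n R) : (Bᵀ * S * B)ᵀ = -(Bᵀ * S * B) := by
  rw [transpose_mul, transpose_mul, hS, transpose_transpose, Matrix.neg_mul, Matrix.mul_neg,
    Matrix.mul_assoc]

end Matrix

theorem eq_zero_of_cross_eq_zero_of_dotProduct_eq_zero {R : Type*} [Field R] [LinearOrder R]
    [IsStrictOrderedRing R] {x e : Fin 3 → R} (he : e ≠ 0) (hcross : x ⨯₃ e = 0)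
    (hdot : x ⬝ᵥ e = 0) : x = 0 := by
  have htriple := cross_cross_eq_smul_sub_smul' e x e
  rw [hcross, map_zero, hdot, zero_smul, sub_zero, eq_comm, smul_eq_zero] at htriple
  exact htriple.resolve_left (mt dotProduct_self_eq_zero.mp he)

theorem skewMat_transpose (t : Fin 3 → ℝ) : (skewMat t)ᵀ = -skewMat t := by
  ext i j
  fin_cases i <;> fin_cases j <;> simp [skewMat]

theorem vecMul_skewMat (v t : Fin 3 → ℝ) : vecMul v (skewMat t) = v ⨯₃ t := by
  ext i
  fin_cases i <;> simp [skewMat, vecMul, dotProduct, Fin.sum_univ_three, cross_apply] <;> ring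

theorem vecMul_aug_eq_zero_iff (A : Matrix (Fin 3) (Fin 3) ℝ) (b x : Fin 3 → ℝ) :
    vecMul x (aug A b) = 0 ↔ vecMul x A = 0 ∧ x ⬝ᵥ b = 0 := by
  simp [funext_iff, Fin.forall_fin_succ, vecMul, dotProduct, aug, and_assoc]

theorem aug_eq_mul_aug_one_zero_add (A : Matrix (Fin 3) (Fin 3) ℝ) (b : Fin 3 → ℝ) :
    aug A b = A * aug 1 0 + aug 0 b := by
  ext i j
  fin_cases j <;> simp [aug, mul_apply, one_apply]

theorem transpose_aug_zero_mul_eq_zero {b : Fin 3 → ℝ} {M : Matrix (Fin 3) (Fin 3) ℝ}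
    (hb : vecMul b M = 0) : (aug 0 b)ᵀ * M = 0 := by
  ext i j
  fin_cases i <;> simp [aug, mul_apply, show ∀ j, ∑ k, b k * M k j = 0 from congrFun hb]

theorem transpose_aug_mul_mul_aug_one_zero (A M : Matrix (Fin 3) (Fin 3) ℝ) {b : Fin 3 → ℝ}
    (hb : vecMul b M = 0) :
    (aug A b)ᵀ * M * aug 1 0 = (aug 1 0)ᵀ * (Aᵀ * M) * aug 1 0 := by
  rw [aug_eq_mul_aug_one_zero_add A b, transpose_add, Matrix.add_mul,
    transpose_aug_zero_mul_eq_zero hb, add_zero, transpose_mul, Matrix.mul_assoc (aug 1 0)ᵀ]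

theorem rank_aug_one_zero : (aug 1 0).rank = 3 :=
  rank_eq_card_of_vecMul_eq_zero fun x hx => by
    simpa using ((vecMul_aug_eq_zero_iff 1 0 x).mp hx).1

theorem rank_aug_skewMat_mul {F : Matrix (Fin 3) (Fin 3) ℝ} (hrank : F.rank = 2)
    {e : Fin 3 → ℝ} (he : e ≠ 0) (heF : vecMul e F = 0) :
    (aug (skewMat e * F) e).rank = 3 := by
  refine rank_eq_card_of_vecMul_eq_zero fun x hx => ?_
  obtain ⟨hxSF, hxe⟩ := (vecMul_aug_eq_zero_iff _ _ x).mp hx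
  rw [← vecMul_vecMul, vecMul_skewMat] at hxSF
  obtain ⟨c, hc⟩ := exists_smul_eq_of_vecMul_eq_zero (by simp [hrank]) he heF hxSF
  have hc0 : c = 0 := by
    have horth := dot_cross_self x e
    rw [← hc, dotProduct_smul, smul_eq_mul, mul_eq_zero] at horth
    exact horth.resolve_right (mt dotProduct_self_eq_zero.mp he)
  rw [hc0, zero_smul, eq_comm] at hc
  exact eq_zero_of_cross_eq_zero_of_dotProduct_eq_zero he hc hxe

/-- For a rank-2 matrix  with left kernel spanned by , the cameras
,  are full rank and have fundamental matrix
proportional to , i.e.  is skew-symmetric. -/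
theorem canonical_cameras (F : Matrix (Fin 3) (Fin 3) ℝ) (hrank : F.rank = 2)
    (e : Fin 3 → ℝ) (he : e ≠ 0) (heF : vecMul e F = 0) :
    (aug (skewMat e * F) e).rank = 3 ∧ (aug (1 : Matrix (Fin 3) (Fin 3) ℝ) 0).rank = 3 ∧
      ((aug (skewMat e * F) e)ᵀ * F * aug (1 : Matrix (Fin 3) (Fin 3) ℝ) 0)ᵀ =
        -((aug (skewMat e * F) e)ᵀ * F * aug (1 : Matrix (Fin 3) (Fin 3) ℝ) 0) := by
  refine ⟨rank_aug_skewMat_mul hrank he heF, rank_aug_one_zero, ?_⟩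
  have hS : (skewMat e)ᵀᵀ = -(skewMat e)ᵀ := by
    rw [transpose_transpose, skewMat_transpose, neg_neg]
  rw [transpose_aug_mul_mul_aug_one_zero _ _ heF, transpose_mul (skewMat e)]
  exact transpose_mul_mul_eq_neg (transpose_mul_mul_eq_neg hS F) _
end

section
/- Let e₁², e₁³ ∈ ℝ³ be linearly independent and F¹² a 3×3 real matrix with (e₁²)ᵀ F¹² = 0, and let e₂³ ∈ ℝ³ with F¹² e₂³ ≠ 0. Then the vectors e₁³, e₁², and [e₁²]ₓ F¹² e₂³ are linearly dependent (equivalently det [e₁³ | e₁² | [e₁²]ₓ F¹² e₂³] = 0) if and only if (e₁³)ᵀ F¹² e₂³ = 0. -/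
open Matrix

/-- The 3×3 matrix with the three given columns. -/
def colMat (c₀ c₁ c₂ : Fin 3 → ℝ) : Matrix (Fin 3) (Fin 3) ℝ :=
  Matrix.of fun i j => ![c₀, c₁, c₂] j i

theorem det_epipolar_criterion (F : Matrix (Fin 3) (Fin 3) ℝ)
    (e₁₂ e₁₃ e₂₃ : Fin 3 → ℝ)
    (hind : LinearIndependent ℝ ![e₁₂, e₁₃])
    (hker : vecMul e₁₂ F = 0)
    (hne : F.mulVec e₂₃ ≠ 0) :
    (colMat e₁₃ e₁₂ ((skewMat e₁₂).mulVec (F.mulVec e₂₃))).det = 0 ↔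
      e₁₃ ⬝ᵥ F.mulVec e₂₃ = 0 := by
  set v := F.mulVec e₂₃ with hv
  have h0 : e₁₂ ⬝ᵥ v = 0 := by
    rw [hv, dotProduct_mulVec, hker, zero_dotProduct]
  have hb : e₁₂ ≠ 0 := by
    have := hind.ne_zero 0
    simpa using this
  have hpos : 0 < e₁₂ 0 ^ 2 + e₁₂ 1 ^ 2 + e₁₂ 2 ^ 2 := by
    rcases (not_forall.mp (fun h => hb (funext fun i => by
      have := h i; simpa using this))) with ⟨i, hi⟩
    have hi' : e₁₂ i ≠ 0 := hi
    fin_cases i <;> positivity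
  have h0' : e₁₂ 0 * v 0 + e₁₂ 1 * v 1 + e₁₂ 2 * v 2 = 0 := by
    simpa [dotProduct, Fin.sum_univ_three] using h0
  have hdot : e₁₃ ⬝ᵥ v = e₁₃ 0 * v 0 + e₁₃ 1 * v 1 + e₁₃ 2 * v 2 := by
    simp [dotProduct, Fin.sum_univ_three]
  have hdet : (colMat e₁₃ e₁₂ ((skewMat e₁₂).mulVec v)).det =
      -(e₁₂ 0 ^ 2 + e₁₂ 1 ^ 2 + e₁₂ 2 ^ 2) *
        (e₁₃ 0 * v 0 + e₁₃ 1 * v 1 + e₁₃ 2 * v 2) := by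
    simp [colMat, skewMat, det_fin_three, mulVec, dotProduct, Fin.sum_univ_three]
    linear_combination (e₁₃ 0 * e₁₂ 0 + e₁₃ 1 * e₁₂ 1 + e₁₃ 2 * e₁₂ 2) * h0'
  rw [hdet, hdot]
  constructor
  · intro h
    rcases mul_eq_zero.mp h with h1 | h1
    · exact absurd h1 (by nlinarith)
    · exact h1
  · intro h; rw [h, mul_zero]
end

section
/- Let L₁, L₂, L₃ be three distinct lines in real projective 3-space passing through non-collinear points a₁, a₂, a₃ respectively, such that each pair Lᵢ, Lⱼ meets. If no Lᵢ lies in the plane spanned by a₁, a₂, a₃, then the three lines have a common point. -/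
open Submodule

/-- Three pairwise-meeting lines in ℙ³ through non-collinear points, none of which
lies in the plane spanned by the three points, have a common point. -/
theorem three_lines_common_point
    (L₁ L₂ L₃ : Submodule ℝ (Fin 4 → ℝ))
    (h₁ : Module.finrank ℝ L₁ = 2) (h₂ : Module.finrank ℝ L₂ = 2)
    (h₃ : Module.finrank ℝ L₃ = 2)
    (hdist : L₁ ≠ L₂ ∧ L₁ ≠ L₃ ∧ L₂ ≠ L₃)
    (a₁ a₂ a₃ : Fin 4 → ℝ)
    (ha₁ : a₁ ∈ L₁) (ha₂ : a₂ ∈ L₂) (ha₃ : a₃ ∈ L₃)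
    (hspan : Module.finrank ℝ (span ℝ ({a₁, a₂, a₃} : Set (Fin 4 → ℝ))) = 3)
    (h₁₂ : L₁ ⊓ L₂ ≠ ⊥) (h₁₃ : L₁ ⊓ L₃ ≠ ⊥) (h₂₃ : L₂ ⊓ L₃ ≠ ⊥)
    (hplane₁ : ¬ L₁ ≤ span ℝ ({a₁, a₂, a₃} : Set (Fin 4 → ℝ)))
    (hplane₂ : ¬ L₂ ≤ span ℝ ({a₁, a₂, a₃} : Set (Fin 4 → ℝ)))
    (hplane₃ : ¬ L₃ ≤ span ℝ ({a₁, a₂, a₃} : Set (Fin 4 → ℝ))) :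
    ∃ x : Fin 4 → ℝ, x ≠ 0 ∧ x ∈ L₁ ∧ x ∈ L₂ ∧ x ∈ L₃ := by
  obtain ⟨hne12, hne13, hne23⟩ := hdist
  -- pick nonzero points in the pairwise intersections
  obtain ⟨x, hx, hx0⟩ := Submodule.exists_mem_ne_zero_of_ne_bot h₁₃
  obtain ⟨y, hy, hy0⟩ := Submodule.exists_mem_ne_zero_of_ne_bot h₂₃
  have hxL₁ : x ∈ L₁ := hx.1
  have hxL₃ : x ∈ L₃ := hx.2
  have hyL₂ : y ∈ L₂ := hy.1
  have hyL₃ : y ∈ L₃ := hy.2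
  by_cases hdep : ∃ c : ℝ, y = c • x
  · obtain ⟨c, rfl⟩ := hdep
    have hc : c ≠ 0 := by rintro rfl; simp at hy0
    have hxL₂ : x ∈ L₂ := by
      have := L₂.smul_mem c⁻¹ hyL₂
      rwa [smul_smul, inv_mul_cancel₀ hc, one_smul] at this
    exact ⟨x, hx0, hxL₁, hxL₂, hxL₃⟩
  · exfalso
    -- x, y are linearly independent, so L₃ = span {x, y} ≤ L₁ ⊔ L₂
    have hli : LinearIndependent ℝ ![x, y] := by
      rw [LinearIndependent.pair_iff]
      intro s t hst
      by_cases ht : t = 0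
      · subst ht
        simp only [zero_smul, add_zero, smul_eq_zero] at hst
        exact ⟨hst.resolve_right hx0, rfl⟩
      · exfalso
        apply hdep
        have h' : t • y = -(s • x) := eq_neg_of_add_eq_zero_right hst
        refine ⟨t⁻¹ * (-s), ?_⟩
        rw [mul_smul, neg_smul, ← h', smul_smul, inv_mul_cancel₀ ht, one_smul]
    have hsp : Module.finrank ℝ (span ℝ ({x, y} : Set (Fin 4 → ℝ))) = 2 := by
      have hcard := finrank_span_eq_card hli
      have hr : Set.range ![x, y] = {x, y} := by
        ext z; simp [Fin.exists_fin_two]; tauto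
      rw [hr] at hcard
      simpa using hcard
    have hle : span ℝ ({x, y} : Set (Fin 4 → ℝ)) ≤ L₃ := by
      rw [span_le]; rintro z (rfl | rfl) <;> simp_all
    have hL₃eq : span ℝ ({x, y} : Set (Fin 4 → ℝ)) = L₃ :=
      Submodule.eq_of_le_of_finrank_eq hle (by rw [hsp, h₃])
    -- L₃ ≤ L₁ ⊔ L₂
    have hL₃le : L₃ ≤ L₁ ⊔ L₂ := by
      rw [← hL₃eq, span_le]
      rintro z (rfl | rfl)
      · exact Submodule.mem_sup_left hxL₁
      · exact Submodule.mem_sup_right hyL₂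
    -- finrank of the sup is 3
    have hinf : 1 ≤ Module.finrank ℝ ↥(L₁ ⊓ L₂) := by
      rw [Nat.one_le_iff_ne_zero]
      intro h0
      exact h₁₂ (Submodule.finrank_eq_zero.mp h0)
    have hsum := Submodule.finrank_sup_add_finrank_inf_eq L₁ L₂
    rw [h₁, h₂] at hsum
    have hsup_le : Module.finrank ℝ ↥(L₁ ⊔ L₂) ≤ 3 := by omega
    have hsup_ne : Module.finrank ℝ ↥(L₁ ⊔ L₂) ≠ 2 := by
      intro h2
      apply hne12
      have e1 : L₁ = L₁ ⊔ L₂ :=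
        Submodule.eq_of_le_of_finrank_eq le_sup_left (by rw [h₁, h2])
      have e2 : L₂ = L₁ ⊔ L₂ :=
        Submodule.eq_of_le_of_finrank_eq le_sup_right (by rw [h₂, h2])
      exact e1.trans e2.symm
    have hsup_ge : 2 ≤ Module.finrank ℝ ↥(L₁ ⊔ L₂) := by
      calc 2 = Module.finrank ℝ L₁ := h₁.symm
        _ ≤ _ := Submodule.finrank_mono le_sup_left
    have hsup3 : Module.finrank ℝ ↥(L₁ ⊔ L₂) = 3 := by omega
    -- the plane spanned by a₁, a₂, a₃ equals L₁ ⊔ L₂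
    have hPle : span ℝ ({a₁, a₂, a₃} : Set (Fin 4 → ℝ)) ≤ L₁ ⊔ L₂ := by
      rw [span_le]
      rintro z (rfl | rfl | rfl)
      · exact Submodule.mem_sup_left ha₁
      · exact Submodule.mem_sup_right ha₂
      · exact hL₃le ha₃
    have hPeq : span ℝ ({a₁, a₂, a₃} : Set (Fin 4 → ℝ)) = L₁ ⊔ L₂ :=
      Submodule.eq_of_le_of_finrank_eq hPle (by rw [hspan, hsup3])
    exact hplane₃ (hPeq ▸ hL₃le)
end

section
/- Let F¹², F¹³, F²³, F¹⁴, F²⁴, F³⁴ be 3×3 real matrices whose epipoles satisfy the Case-1 hypotheses, and define cameras C₁, C₂, C₃ with columns scaled by epipolar numbers as: C₁ = [0 | 𝐞₃₁₂₄ e₁² | -𝐞₄₁₂₃ e₁³ | 𝐞₃₁₂₄ e₁⁴], C₂ = [-𝐞₄₂₃₁ e₂¹ | 0 | 𝐞₁₂₃₄ e₂³ | 𝐞₁₂₃₄ e₂⁴], C₃ = [𝐞₄₁₃₂ e₃¹ | -𝐞₂₁₃₄ e₃² | 0 | 𝐞₄₁₃₂ e₃⁴]. If the triplewise conditions (eᵢᵏ)ᵀ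 Fⁱʲ eⱼᵏ = 0 hold for all distinct i,j,k ∈ {1,2,3,4}, then (C₁p)ᵀ F¹² C₂p = 0, (C₁p)ᵀ F¹³ C₃p = 0, and (C₂p)ᵀ F²³ C₃p = 0 for every p ∈ ℝ⁴. -/
open Matrix

/-- The 3×4 matrix with the four given columns. -/
def cols4 (c₀ c₁ c₂ c₃ : Fin 3 → ℝ) : Matrix (Fin 3) (Fin 4) ℝ :=
  Matrix.of fun i j => ![c₀, c₁, c₂, c₃] j i


lemma mulVec_cols4 (c₀ c₁ c₂ c₃ : Fin 3 → ℝ) (p : Fin 4 → ℝ) :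
    (cols4 c₀ c₁ c₂ c₃).mulVec p = p 0 • c₀ + p 1 • c₁ + p 2 • c₂ + p 3 • c₃ := by
  funext i
  simp [cols4, mulVec, dotProduct, Fin.sum_univ_four, mul_comm]

/-- Case 1 reconstruction: the explicitly defined cameras `C₁, C₂, C₃` (whose
columns are epipoles scaled by epipolar numbers) satisfy the epipolar
constraints for `F¹², F¹³, F²³`, given the kernel and triplewise conditions. -/
theorem case1_camera_reconstruction
    (F12 F13 F14 F23 F24 F34 : Matrix (Fin 3) (Fin 3) ℝ)
    (e12 e13 e14 e21 e23 e24 e31 e32 e34 e41 e42 e43 : Fin 3 → ℝ)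
    -- epipoles: `eⱼⁱ` spans the kernel of `Fⁱʲ`, `eᵢʲ` the left kernel (since `Fʲⁱ = (Fⁱʲ)ᵀ`)
    (h12r : F12.mulVec e21 = 0) (h12l : vecMul e12 F12 = 0)
    (h13r : F13.mulVec e31 = 0) (h13l : vecMul e13 F13 = 0)
    (h14r : F14.mulVec e41 = 0) (h14l : vecMul e14 F14 = 0)
    (h23r : F23.mulVec e32 = 0) (h23l : vecMul e23 F23 = 0)
    (h24r : F24.mulVec e42 = 0) (h24l : vecMul e24 F24 = 0)
    (h34r : F34.mulVec e43 = 0) (h34l : vecMul e34 F34 = 0)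
    -- Case-1 hypotheses: in each image the three epipoles are not collinear
    (hgen1 : LinearIndependent ℝ ![e12, e13, e14])
    (hgen2 : LinearIndependent ℝ ![e21, e23, e24])
    (hgen3 : LinearIndependent ℝ ![e31, e32, e34])
    (hgen4 : LinearIndependent ℝ ![e41, e42, e43])
    -- triplewise conditions `(eᵢᵏ)ᵀ Fⁱʲ eⱼᵏ = 0` for all distinct i, j, k
    (t312 : e13 ⬝ᵥ F12.mulVec e23 = 0) (t412 : e14 ⬝ᵥ F12.mulVec e24 = 0)
    (t213 : e12 ⬝ᵥ F13.mulVec e32 = 0) (t413 : e14 ⬝ᵥ F13.mulVec e34 = 0)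
    (t214 : e12 ⬝ᵥ F14.mulVec e42 = 0) (t314 : e13 ⬝ᵥ F14.mulVec e43 = 0)
    (t123 : e21 ⬝ᵥ F23.mulVec e31 = 0) (t423 : e24 ⬝ᵥ F23.mulVec e34 = 0)
    (t124 : e21 ⬝ᵥ F24.mulVec e41 = 0) (t324 : e23 ⬝ᵥ F24.mulVec e43 = 0)
    (t134 : e31 ⬝ᵥ F34.mulVec e41 = 0) (t234 : e32 ⬝ᵥ F34.mulVec e42 = 0) :
    -- the reconstructed cameras
    ∀ p : Fin 4 → ℝ,
      ((cols4 0 ((e13 ⬝ᵥ F12.mulVec e24) • e12) (-(e14 ⬝ᵥ F12.mulVec e23) • e13)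
          ((e13 ⬝ᵥ F12.mulVec e24) • e14)).mulVec p) ⬝ᵥ
        F12.mulVec ((cols4 (-(e24 ⬝ᵥ F23.mulVec e31) • e21) 0
          ((e21 ⬝ᵥ F23.mulVec e34) • e23) ((e21 ⬝ᵥ F23.mulVec e34) • e24)).mulVec p) = 0 ∧
      ((cols4 0 ((e13 ⬝ᵥ F12.mulVec e24) • e12) (-(e14 ⬝ᵥ F12.mulVec e23) • e13)
          ((e13 ⬝ᵥ F12.mulVec e24) • e14)).mulVec p) ⬝ᵥ
        F13.mulVec ((cols4 ((e14 ⬝ᵥ F13.mulVec e32) • e31) (-(e12 ⬝ᵥ F13.mulVec e34) • e32)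
          0 ((e14 ⬝ᵥ F13.mulVec e32) • e34)).mulVec p) = 0 ∧
      ((cols4 (-(e24 ⬝ᵥ F23.mulVec e31) • e21) 0 ((e21 ⬝ᵥ F23.mulVec e34) • e23)
          ((e21 ⬝ᵥ F23.mulVec e34) • e24)).mulVec p) ⬝ᵥ
        F23.mulVec ((cols4 ((e14 ⬝ᵥ F13.mulVec e32) • e31) (-(e12 ⬝ᵥ F13.mulVec e34) • e32)
          0 ((e14 ⬝ᵥ F13.mulVec e32) • e34)).mulVec p) = 0 := by

  have k12 : ∀ x, e12 ⬝ᵥ F12.mulVec x = 0 := fun x => by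
    rw [dotProduct_mulVec, h12l, zero_dotProduct]
  have k13 : ∀ x, e13 ⬝ᵥ F13.mulVec x = 0 := fun x => by
    rw [dotProduct_mulVec, h13l, zero_dotProduct]
  have k23 : ∀ x, e23 ⬝ᵥ F23.mulVec x = 0 := fun x => by
    rw [dotProduct_mulVec, h23l, zero_dotProduct]
  intro p
  refine ⟨?_, ?_, ?_⟩ <;>
  · rw [mulVec_cols4, mulVec_cols4]
    simp only [mulVec_add, mulVec_smul, smul_smul, smul_zero, h12r, h13r, h23r,
      dotProduct_add, add_dotProduct, smul_dotProduct, dotProduct_smul, smul_eq_mul,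
      dotProduct_zero, zero_dotProduct, mulVec_zero, k12, k13, k23,
      t312, t412, t213, t413, t123, t423,
      mul_zero, zero_mul, add_zero, zero_add, neg_mul, mul_neg, neg_smul, neg_dotProduct,
      dotProduct_neg, mulVec_neg, neg_zero]
    ring
end
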